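/- For small σ the tradeoff exponent satisfies τ(σ) ≥ 1 - √(2σ): for every σ ∈ (0, 1/2], τ(σ) ≥ 1 - √(2σ). -/
import Mathlib


/-- The "magic sequence" ρ_ℓ = 1 + ℓ(ℓ+1)/2, as a real number. -/
noncomputable def rho (l : ℕ) : ℝ := 1 + (l : ℝ) * ((l : ℝ) + 1) / 2

/-- `IsTau tau` expresses that `tau` is the tradeoff function of Dinur et al.:
`tau σ = 1/2` for `σ > 1/2`, and `tau σ = 1 - 1/(ℓ+1) - σ(ρ_ℓ-2)/(ℓ+1)`
where `ℓ ≥ 1` is the unique integer with `1/ρ_{ℓ+1} < σ ≤ 1/ρ_ℓ`. -/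
def IsTau (tau : ℝ → ℝ) : Prop :=
  (∀ σ : ℝ, 1 / 2 < σ → σ ≤ 1 → tau σ = 1 / 2) ∧
  (∀ σ : ℝ, 0 < σ → σ ≤ 1 / 2 → ∀ l : ℕ, 1 ≤ l →
    1 / rho (l + 1) < σ → σ ≤ 1 / rho l →
    tau σ = 1 - 1 / ((l : ℝ) + 1) - σ * (rho l - 2) / ((l : ℝ) + 1))

lemma rho_pos (n : ℕ) : 0 < rho n := by
  unfold rho; positivity

lemma key_ineq (L t : ℝ) (hL : 1 ≤ L) (ht : 0 < t)
    (h1 : 4 < t^2*(L^2+3*L+4)) (h2 : t^2*(L^2+L+2) ≤ 4) :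
    4*t*(L+1) ≥ 4 + t^2*(L^2+L-2) := by
  nlinarith [sq_nonneg (t*(L+1)-2), sq_nonneg (t*L-2), mul_pos ht ht, sq_nonneg t,
    mul_pos (mul_pos ht ht) ht, sq_nonneg (t*(L+2)-2)]

theorem tau_ge_one_sub_sqrt (tau : ℝ → ℝ) (htau : IsTau tau) (σ : ℝ)
    (h0 : 0 < σ) (h2 : σ ≤ 1 / 2) :
    tau σ ≥ 1 - Real.sqrt (2 * σ) := by
  -- find ℓ
  have hex : ∃ n : ℕ, 1 / rho (n + 1) < σ := by
    refine ⟨⌈1/σ⌉₊, ?_⟩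
    have h1 : 1/σ ≤ (⌈1/σ⌉₊ : ℝ) := Nat.le_ceil _
    have h3 : (⌈1/σ⌉₊ : ℝ) < rho (⌈1/σ⌉₊ + 1) := by
      unfold rho
      push_cast
      nlinarith [Nat.cast_nonneg (α := ℝ) ⌈1/σ⌉₊]
    have h4 : 1/σ < rho (⌈1/σ⌉₊ + 1) := lt_of_le_of_lt h1 h3
    rw [div_lt_iff₀ (rho_pos _)]
    rw [div_lt_iff₀ h0] at h4
    linarith
  classical
  set l := Nat.find hex with hl
  have hfind : 1 / rho (l + 1) < σ := Nat.find_spec hex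
  have hl1 : 1 ≤ l := by
    by_contra h
    push_neg at h
    interval_cases l
    · have : rho 1 = 2 := by unfold rho; norm_num
      rw [this] at hfind
      linarith
  have hup : σ ≤ 1 / rho l := by
    obtain ⟨m, hm⟩ : ∃ m, l = m + 1 := ⟨l - 1, (Nat.succ_pred_eq_of_pos hl1).symm⟩
    have := Nat.find_min hex (m := m) (by omega)
    rw [← hm] at this
    linarith [not_lt.mp this]
  rw [htau.2 σ h0 h2 l hl1 hfind hup]
  -- set t = sqrt (2σ)
  set t := Real.sqrt (2 * σ) with htdef
  have ht0 : 0 < t := Real.sqrt_pos.mpr (by linarith)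
  have ht2 : t ^ 2 = 2 * σ := Real.sq_sqrt (by linarith)
  set L : ℝ := (l : ℝ) with hLdef
  have hLge : 1 ≤ L := by rw [hLdef]; exact_mod_cast hl1
  have hL1 : (0 : ℝ) < L + 1 := by linarith
  -- translate bounds
  have hb1 : 4 < t^2*(L^2+3*L+4) := by
    rw [div_lt_iff₀ (rho_pos _)] at hfind
    have : rho (l + 1) = 1 + (L+1)*(L+2)/2 := by
      unfold rho; push_cast; ring
    rw [this] at hfind
    nlinarith
  have hb2 : t^2*(L^2+L+2) ≤ 4 := by
    rw [le_div_iff₀ (rho_pos _)] at hup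
    have : rho l = 1 + L*(L+1)/2 := rfl
    rw [this] at hup
    nlinarith
  have hkey := key_ineq L t hLge ht0 hb1 hb2
  have hrho : rho l = 1 + L*(L+1)/2 := rfl
  rw [hrho]
  rw [show 1 - 1/(L+1) - σ*(1 + L*(L+1)/2 - 2)/(L+1)
      = 1 - (1 + σ*(L*(L+1)/2 - 1))/(L+1) by field_simp; ring]
  rw [ge_iff_le, sub_le_sub_iff_left, div_le_iff₀ hL1]
  nlinarith
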